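/- arXiv:2111.05402 — 3 statements merged into one kernel-verified Lean document; each statement's English description precedes it below -/
import Mathlib

section
/- Let v be a finitely additive, divisible valuation on the algebra I([0,1]) of finite unions of intervals, normalized by v(∅)=0 and v([0,1])=1. Then the distribution function F(x) = v([0,x]) is continuous on [0,1] and F(0) = 0. -/
/-- A (possibly degenerate or empty) interval of the cake `X = [0,1]`. -/
def IsIntervalOfUnit (S : Set ℝ) : Prop :=
  S ⊆ Set.Icc (0:ℝ) 1 ∧ S.OrdConnected

/-- `I(X)`: finite unions of intervals of `[0,1]`. -/
def InFiniteUnions (S : Set ℝ) : Prop :=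
  ∃ (n : ℕ) (f : Fin n → Set ℝ), (∀ i, IsIntervalOfUnit (f i)) ∧ S = ⋃ i, f i

lemma inFU_subset {S : Set ℝ} (h : InFiniteUnions S) : S ⊆ Set.Icc 0 1 := by
  obtain ⟨n, f, hf, rfl⟩ := h
  exact Set.iUnion_subset fun i => (hf i).1

lemma interval_inFU {S : Set ℝ} (h : IsIntervalOfUnit S) : InFiniteUnions S :=
  ⟨1, fun _ => S, fun _ => h, (Set.iUnion_const S).symm⟩

lemma Icc_interval {a b : ℝ} (h0 : 0 ≤ a) (h1 : b ≤ 1) : IsIntervalOfUnit (Set.Icc a b) :=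
  ⟨fun y hy => ⟨le_trans h0 hy.1, le_trans hy.2 h1⟩, Set.ordConnected_Icc⟩

lemma Ioc_interval {a b : ℝ} (h0 : 0 ≤ a) (h1 : b ≤ 1) : IsIntervalOfUnit (Set.Ioc a b) :=
  ⟨fun y hy => ⟨le_trans h0 hy.1.le, le_trans hy.2 h1⟩, Set.ordConnected_Ioc⟩

lemma Ioo_interval {a b : ℝ} (h0 : 0 ≤ a) (h1 : b ≤ 1) : IsIntervalOfUnit (Set.Ioo a b) :=
  ⟨fun y hy => ⟨le_trans h0 hy.1.le, le_trans hy.2.le h1⟩, Set.ordConnected_Ioo⟩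

lemma inFU_iff {S : Set ℝ} : InFiniteUnions S ↔
    ∃ 𝒮 : Set (Set ℝ), 𝒮.Finite ∧ (∀ T ∈ 𝒮, IsIntervalOfUnit T) ∧ S = ⋃₀ 𝒮 := by
  constructor
  · rintro ⟨n, f, hf, rfl⟩
    exact ⟨Set.range f, Set.finite_range f, by rintro T ⟨i, rfl⟩; exact hf i,
      (Set.sUnion_range f).symm⟩
  · rintro ⟨𝒮, hfin, hint, rfl⟩
    classical
    set t := hfin.toFinset with ht
    refine ⟨t.card, fun i => ((t.equivFin.symm i : Set ℝ)), ?_, ?_⟩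
    · intro i
      exact hint _ (hfin.mem_toFinset.mp (t.equivFin.symm i).2)
    · ext x
      simp only [Set.mem_sUnion, Set.mem_iUnion]
      constructor
      · rintro ⟨T, hT, hx⟩
        exact ⟨t.equivFin ⟨T, hfin.mem_toFinset.mpr hT⟩, by simpa using hx⟩
      · rintro ⟨i, hx⟩
        exact ⟨_, hfin.mem_toFinset.mp (t.equivFin.symm i).2, hx⟩

lemma union_inFU {A B : Set ℝ} (hA : InFiniteUnions A) (hB : InFiniteUnions B) :
    InFiniteUnions (A ∪ B) := by
  rw [inFU_iff] at *
  obtain ⟨S, hS, hS2, rfl⟩ := hA; obtain ⟨T, hT, hT2, rfl⟩ := hB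
  exact ⟨S ∪ T, hS.union hT, by rintro U (h | h); exacts [hS2 U h, hT2 U h],
    (Set.sUnion_union _ _).symm⟩

lemma inter_inFU {A B : Set ℝ} (hA : InFiniteUnions A) (hB : InFiniteUnions B) :
    InFiniteUnions (A ∩ B) := by
  rw [inFU_iff] at *
  obtain ⟨S, hSf, hSi, rfl⟩ := hA; obtain ⟨T, hTf, hTi, rfl⟩ := hB
  refine ⟨Set.image2 (· ∩ ·) S T, hSf.image2 _ hTf, ?_, ?_⟩
  · rintro U ⟨P, hP, Q, hQ, rfl⟩
    exact ⟨fun y hy => (hSi P hP).1 hy.1, (hSi P hP).2.inter (hTi Q hQ).2⟩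
  · ext x
    constructor
    · rintro ⟨⟨P, hP, hxP⟩, ⟨Q, hQ, hxQ⟩⟩
      exact ⟨P ∩ Q, ⟨P, hP, Q, hQ, rfl⟩, hxP, hxQ⟩
    · rintro ⟨U, ⟨P, hP, Q, hQ, rfl⟩, hxP, hxQ⟩
      exact ⟨⟨P, hP, hxP⟩, ⟨Q, hQ, hxQ⟩⟩

lemma compl_interval {T : Set ℝ} (hT : IsIntervalOfUnit T) :
    InFiniteUnions (Set.Icc 0 1 \ T) := by
  have hLconn : (Set.Icc (0:ℝ) 1 ∩ {y : ℝ | ∀ t ∈ T, y < t}).OrdConnected :=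
    Set.ordConnected_Icc.inter ⟨fun u hu v hv w hw t ht => lt_of_le_of_lt hw.2 (hv t ht)⟩
  have hRconn : (Set.Icc (0:ℝ) 1 ∩ {y : ℝ | ∀ t ∈ T, t < y}).OrdConnected :=
    Set.ordConnected_Icc.inter ⟨fun u hu v hv w hw t ht => lt_of_lt_of_le (hu t ht) hw.1⟩
  have heq : Set.Icc (0:ℝ) 1 \ T =
      (Set.Icc 0 1 ∩ {y : ℝ | ∀ t ∈ T, y < t}) ∪ (Set.Icc 0 1 ∩ {y : ℝ | ∀ t ∈ T, t < y}) := by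
    ext y
    constructor
    · rintro ⟨hy, hyT⟩
      by_cases h1 : ∀ t ∈ T, y < t
      · exact Or.inl ⟨hy, h1⟩
      · right
        refine ⟨hy, fun t ht => ?_⟩
        push_neg at h1
        obtain ⟨t1, ht1, ht1y⟩ := h1
        rcases lt_or_ge t y with h | h
        · exact h
        · exact absurd (hT.2.out ht1 ht ⟨ht1y, h⟩) hyT
    · rintro (⟨hy, hyL⟩ | ⟨hy, hyR⟩)
      · exact ⟨hy, fun hyT => lt_irrefl y (hyL y hyT)⟩
      · exact ⟨hy, fun hyT => lt_irrefl y (hyR y hyT)⟩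
  rw [heq]
  exact union_inFU (interval_inFU ⟨Set.inter_subset_left, hLconn⟩)
    (interval_inFU ⟨Set.inter_subset_left, hRconn⟩)

lemma compl_sUnion (S : Set (Set ℝ)) (hSf : S.Finite) :
    (∀ T ∈ S, IsIntervalOfUnit T) → InFiniteUnions (Set.Icc 0 1 \ ⋃₀ S) := by
  refine Set.Finite.induction_on
    (motive := fun X _ => (∀ T ∈ X, IsIntervalOfUnit T) → InFiniteUnions (Set.Icc 0 1 \ ⋃₀ X))
    S hSf ?_ ?_
  · intro _; simpa using interval_inFU ⟨subset_rfl, Set.ordConnected_Icc⟩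
  · intro a s hnot hfin ih h
    have heq : Set.Icc (0:ℝ) 1 \ ⋃₀ insert a s = (Set.Icc 0 1 \ a) ∩ (Set.Icc 0 1 \ ⋃₀ s) := by
      rw [Set.sUnion_insert]
      ext y
      simp only [Set.mem_diff, Set.mem_union, Set.mem_inter_iff]
      tauto
    rw [heq]
    exact inter_inFU (compl_interval (h a (Set.mem_insert _ _)))
      (ih fun T hT => h T (Set.mem_insert_of_mem _ hT))

lemma compl_inFU {A : Set ℝ} (hA : InFiniteUnions A) : InFiniteUnions (Set.Icc 0 1 \ A) := by
  rw [inFU_iff] at hA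
  obtain ⟨S, hSf, hSi, rfl⟩ := hA
  exact compl_sUnion S hSf hSi

lemma diff_inFU {A B : Set ℝ} (hA : InFiniteUnions A) (hB : InFiniteUnions B) :
    InFiniteUnions (A \ B) := by
  have heq : A \ B = A ∩ (Set.Icc 0 1 \ B) := by
    ext x
    constructor
    · rintro ⟨hx, hxB⟩; exact ⟨hx, inFU_subset hA hx, hxB⟩
    · rintro ⟨hx, _, hxB⟩; exact ⟨hx, hxB⟩
  rw [heq]; exact inter_inFU hA (compl_inFU hB)

lemma v_nonneg {v : Set ℝ → ℝ} (h_range : ∀ A, InFiniteUnions A → v A ∈ Set.Icc (0:ℝ) 1)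
    {A : Set ℝ} (hA : InFiniteUnions A) : 0 ≤ v A := (h_range A hA).1

lemma v_diff {v : Set ℝ → ℝ}
    (h_add : ∀ A B, InFiniteUnions A → InFiniteUnions B → Disjoint A B → v (A ∪ B) = v A + v B)
    {A B : Set ℝ} (hA : InFiniteUnions A) (hB : InFiniteUnions B) (hBA : B ⊆ A) :
    v A = v B + v (A \ B) := by
  have hd : Disjoint B (A \ B) := Set.disjoint_left.mpr fun x hxB hxd => hxd.2 hxB
  have hu : B ∪ A \ B = A := Set.union_diff_cancel hBA
  have h2 := h_add B (A \ B) hB (diff_inFU hA hB) hd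
  rw [hu] at h2
  exact h2

lemma v_mono {v : Set ℝ → ℝ} (h_range : ∀ A, InFiniteUnions A → v A ∈ Set.Icc (0:ℝ) 1)
    (h_add : ∀ A B, InFiniteUnions A → InFiniteUnions B → Disjoint A B → v (A ∪ B) = v A + v B)
    {A B : Set ℝ} (hA : InFiniteUnions A) (hB : InFiniteUnions B) (hBA : B ⊆ A) :
    v B ≤ v A := by
  have h1 := v_diff h_add hA hB hBA
  have h2 := v_nonneg h_range (diff_inFU hA hB)
  linarith

lemma v_singleton {v : Set ℝ → ℝ} (h_zero : v ∅ = 0)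
    (h_div : ∀ A, InFiniteUnions A → ∀ α : ℝ, α ∈ Set.Icc (0:ℝ) 1 →
      ∃ B, InFiniteUnions B ∧ B ⊆ A ∧ v B = α * v A)
    {x : ℝ} (hx : x ∈ Set.Icc (0:ℝ) 1) : v {x} = 0 := by
  have hI : InFiniteUnions {x} := by
    have := interval_inFU (Icc_interval hx.1 hx.2)
    rwa [Set.Icc_self] at this
  obtain ⟨B, hB, hBsub, hvB⟩ := h_div {x} hI (1/2) ⟨by norm_num, by norm_num⟩
  rcases Set.subset_singleton_iff_eq.mp hBsub with h | h
  · rw [h, h_zero] at hvB; linarith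
  · rw [h] at hvB; linarith

lemma v_Icc_split {v : Set ℝ → ℝ}
    (h_add : ∀ A B, InFiniteUnions A → InFiniteUnions B → Disjoint A B → v (A ∪ B) = v A + v B)
    {x y : ℝ} (h0 : 0 ≤ x) (hxy : x ≤ y) (h1 : y ≤ 1) :
    v (Set.Icc 0 y) = v (Set.Icc 0 x) + v (Set.Ioc x y) := by
  rw [← Set.Icc_union_Ioc_eq_Icc h0 hxy]
  exact h_add _ _ (interval_inFU (Icc_interval le_rfl (le_trans hxy h1)))
    (interval_inFU (Ioc_interval h0 h1))
    (Set.disjoint_left.mpr fun z hz1 hz2 => absurd hz1.2 (not_le.mpr hz2.1))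

lemma v_Ioc_eq_Ioo {v : Set ℝ → ℝ} (h_zero : v ∅ = 0)
    (h_add : ∀ A B, InFiniteUnions A → InFiniteUnions B → Disjoint A B → v (A ∪ B) = v A + v B)
    (h_div : ∀ A, InFiniteUnions A → ∀ α : ℝ, α ∈ Set.Icc (0:ℝ) 1 →
      ∃ B, InFiniteUnions B ∧ B ⊆ A ∧ v B = α * v A)
    {a b : ℝ} (h0 : 0 ≤ a) (hab : a < b) (h1 : b ≤ 1) :
    v (Set.Ioc a b) = v (Set.Ioo a b) := by
  have heq : Set.Ioo a b ∪ Set.Icc b b = Set.Ioc a b := Set.Ioo_union_Icc_eq_Ioc hab le_rfl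
  rw [← heq, h_add _ _ (interval_inFU (Ioo_interval h0 h1))
    (interval_inFU (Icc_interval (le_trans h0 hab.le) h1))
    (Set.disjoint_left.mpr fun z hz1 hz2 => absurd hz2.1 (not_le.mpr hz1.2)),
    Set.Icc_self, v_singleton h_zero h_div ⟨le_trans h0 hab.le, h1⟩]
  ring

lemma interval_tail {T : Set ℝ} {y0 x : ℝ} (hT : T.OrdConnected) (hsub : T ⊆ Set.Ioo y0 x)
    (hy : y0 < x) :
    (∃ t, t < x ∧ Set.Ioo t x ⊆ T) ∨ (∃ z, y0 ≤ z ∧ z < x ∧ T ⊆ Set.Iic z) := by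
  by_cases hb : ∃ z, y0 ≤ z ∧ z < x ∧ T ⊆ Set.Iic z
  · exact Or.inr hb
  · left
    push_neg at hb
    have hb' : ∀ z, y0 ≤ z → z < x → ∃ u ∈ T, z < u := by
      intro z h1 h2
      have h3 := hb z h1 h2
      rw [Set.not_subset] at h3
      obtain ⟨u, huT, hu⟩ := h3
      exact ⟨u, huT, not_le.mp fun h => hu (Set.mem_Iic.mpr h)⟩
    obtain ⟨u0, hu0T, _⟩ := hb' y0 le_rfl hy
    refine ⟨u0, (hsub hu0T).2, fun s hs => ?_⟩
    obtain ⟨u, huT, hu⟩ := hb' s (le_of_lt (lt_trans (hsub hu0T).1 hs.1)) hs.2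
    exact hT.out hu0T huT ⟨hs.1.le, hu.le⟩

lemma interval_head {T : Set ℝ} {x y0 : ℝ} (hT : T.OrdConnected) (hsub : T ⊆ Set.Ioo x y0)
    (hy : x < y0) :
    (∃ t, x < t ∧ Set.Ioo x t ⊆ T) ∨ (∃ z, x < z ∧ z ≤ y0 ∧ T ⊆ Set.Ici z) := by
  by_cases hb : ∃ z, x < z ∧ z ≤ y0 ∧ T ⊆ Set.Ici z
  · exact Or.inr hb
  · left
    push_neg at hb
    have hb' : ∀ z, x < z → z ≤ y0 → ∃ u ∈ T, u < z := by
      intro z h1 h2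
      have h3 := hb z h1 h2
      rw [Set.not_subset] at h3
      obtain ⟨u, huT, hu⟩ := h3
      exact ⟨u, huT, not_le.mp fun h => hu (Set.mem_Ici.mpr h)⟩
    obtain ⟨u0, hu0T, _⟩ := hb' y0 hy le_rfl
    refine ⟨u0, (hsub hu0T).1, fun s hs => ?_⟩
    obtain ⟨u, huT, hu⟩ := hb' s hs.1 (le_of_lt (lt_trans hs.2 (hsub hu0T).2))
    exact hT.out huT hu0T ⟨hu.le, hs.2.le⟩

lemma union_bounded_above : ∀ (n : ℕ) (f : Fin n → Set ℝ) (y0 x : ℝ), y0 < x →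
    (∀ i, ∃ z, y0 ≤ z ∧ z < x ∧ f i ⊆ Set.Iic z) →
    ∃ z, y0 ≤ z ∧ z < x ∧ (⋃ i, f i) ⊆ Set.Iic z := by
  intro n
  induction n with
  | zero => intro f y0 x h _; exact ⟨y0, le_rfl, h, by simp⟩
  | succ n ih =>
    intro f y0 x h hf
    obtain ⟨z1, hz10, hz1x, hz1⟩ := ih (fun i => f i.succ) y0 x h (fun i => hf i.succ)
    obtain ⟨z0, hz00, hz0x, hz0⟩ := hf 0
    refine ⟨max z0 z1, le_trans hz00 (le_max_left _ _), max_lt hz0x hz1x, ?_⟩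
    intro s hs
    rw [Set.mem_Iic]
    obtain ⟨i, hi⟩ := Set.mem_iUnion.mp hs
    rcases Fin.eq_zero_or_eq_succ i with h' | ⟨j, rfl⟩
    · subst h'
      exact le_trans (Set.mem_Iic.mp (hz0 hi)) (le_max_left _ _)
    · exact le_trans (Set.mem_Iic.mp (hz1 (Set.mem_iUnion.mpr ⟨j, hi⟩))) (le_max_right _ _)

lemma union_bounded_below : ∀ (n : ℕ) (f : Fin n → Set ℝ) (x y0 : ℝ), x < y0 →
    (∀ i, ∃ z, x < z ∧ z ≤ y0 ∧ f i ⊆ Set.Ici z) →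
    ∃ z, x < z ∧ z ≤ y0 ∧ (⋃ i, f i) ⊆ Set.Ici z := by
  intro n
  induction n with
  | zero => intro f x y0 h _; exact ⟨y0, h, le_rfl, by simp⟩
  | succ n ih =>
    intro f x y0 h hf
    obtain ⟨z1, hz10, hz1x, hz1⟩ := ih (fun i => f i.succ) x y0 h (fun i => hf i.succ)
    obtain ⟨z0, hz00, hz0x, hz0⟩ := hf 0
    refine ⟨min z0 z1, lt_min hz00 hz10, le_trans (min_le_right _ _) hz1x, ?_⟩
    intro s hs
    rw [Set.mem_Ici]
    obtain ⟨i, hi⟩ := Set.mem_iUnion.mp hs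
    rcases Fin.eq_zero_or_eq_succ i with h' | ⟨j, rfl⟩
    · subst h'
      exact le_trans (min_le_left _ _) (Set.mem_Ici.mp (hz0 hi))
    · exact le_trans (min_le_right _ _) (Set.mem_Ici.mp (hz1 (Set.mem_iUnion.mpr ⟨j, hi⟩)))

lemma key_left {v : Set ℝ → ℝ}
    (h_range : ∀ A, InFiniteUnions A → v A ∈ Set.Icc (0:ℝ) 1)
    (h_zero : v ∅ = 0)
    (h_add : ∀ A B, InFiniteUnions A → InFiniteUnions B → Disjoint A B → v (A ∪ B) = v A + v B)
    (h_div : ∀ A, InFiniteUnions A → ∀ α : ℝ, α ∈ Set.Icc (0:ℝ) 1 →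
      ∃ B, InFiniteUnions B ∧ B ⊆ A ∧ v B = α * v A)
    {x : ℝ} (hx0 : 0 < x) (hx1 : x ≤ 1) {ε : ℝ} (hε : 0 < ε) :
    ∃ y, 0 ≤ y ∧ y < x ∧ v (Set.Ioc y x) < ε := by
  by_contra hcon
  push_neg at hcon
  set S := {r : ℝ | ∃ y, 0 ≤ y ∧ y < x ∧ r = v (Set.Ioc y x)} with hS
  have hSne : S.Nonempty := ⟨v (Set.Ioc 0 x), 0, le_rfl, hx0, rfl⟩
  have hSbd : ∀ r ∈ S, ε ≤ r := by rintro r ⟨y, hy0, hyx, rfl⟩; exact hcon y hy0 hyx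
  have hbdd : BddBelow S := ⟨ε, hSbd⟩
  set L := sInf S with hL
  have hLε : ε ≤ L := le_csInf hSne hSbd
  obtain ⟨r, hrS, hr2⟩ := exists_lt_of_csInf_lt hSne (show sInf S < 2 * L by rw [← hL]; linarith)
  obtain ⟨y0, hy00, hy0x, rfl⟩ := hrS
  have haL : L ≤ v (Set.Ioc y0 x) := csInf_le hbdd ⟨y0, hy00, hy0x, rfl⟩
  have hAeq : v (Set.Ioc y0 x) = v (Set.Ioo y0 x) := v_Ioc_eq_Ioo h_zero h_add h_div hy00 hy0x hx1
  have hIoo : InFiniteUnions (Set.Ioo y0 x) := interval_inFU (Ioo_interval hy00 hx1)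
  obtain ⟨B, hB, hBsub, hvB⟩ := h_div (Set.Ioo y0 x) hIoo (1/2) ⟨by norm_num, by norm_num⟩
  obtain ⟨n, f, hfi, hBeq⟩ := id hB
  subst hBeq
  by_cases htail : ∃ i t, t < x ∧ Set.Ioo t x ⊆ f i
  · obtain ⟨i, t, htx, hsub⟩ := htail
    have ht'x : max t y0 < x := max_lt htx hy0x
    have hsub' : Set.Ioo (max t y0) x ⊆ ⋃ i, f i := fun s hs =>
      Set.mem_iUnion.mpr ⟨i, hsub ⟨(le_max_left t y0).trans_lt hs.1, hs.2⟩⟩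
    have h1 : v (Set.Ioo (max t y0) x) ≤ v (⋃ i, f i) :=
      v_mono h_range h_add hB
        (interval_inFU (Ioo_interval (hy00.trans (le_max_right t y0)) hx1)) hsub'
    have h2 : v (Set.Ioc (max t y0) x) = v (Set.Ioo (max t y0) x) :=
      v_Ioc_eq_Ioo h_zero h_add h_div (hy00.trans (le_max_right t y0)) ht'x hx1
    have h3 : L ≤ v (Set.Ioc (max t y0) x) :=
      csInf_le hbdd ⟨max t y0, hy00.trans (le_max_right t y0), ht'x, rfl⟩
    linarith
  · push_neg at htail
    have hbdd_each : ∀ i, ∃ z, y0 ≤ z ∧ z < x ∧ f i ⊆ Set.Iic z := by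
      intro i
      rcases interval_tail (hfi i).2 ((Set.subset_iUnion f i).trans hBsub) hy0x with h | h
      · obtain ⟨t, htx, hsub⟩ := h
        exact absurd hsub (htail i t htx)
      · exact h
    obtain ⟨z, hz0, hzx, hzB⟩ := union_bounded_above n f y0 x hy0x hbdd_each
    have hdisj : Disjoint (⋃ i, f i) (Set.Ioo z x) :=
      Set.disjoint_left.mpr fun s hsB hsC => absurd (Set.mem_Iic.mp (hzB hsB)) (not_le.mpr hsC.1)
    have hCI : InFiniteUnions (Set.Ioo z x) := interval_inFU (Ioo_interval (hy00.trans hz0) hx1)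
    have hsub2 : (⋃ i, f i) ∪ Set.Ioo z x ⊆ Set.Ioo y0 x :=
      Set.union_subset hBsub (fun s hs => ⟨lt_of_le_of_lt hz0 hs.1, hs.2⟩)
    have hmono := v_mono h_range h_add hIoo (union_inFU hB hCI) hsub2
    rw [h_add _ _ hB hCI hdisj] at hmono
    have h4 : v (Set.Ioc z x) = v (Set.Ioo z x) :=
      v_Ioc_eq_Ioo h_zero h_add h_div (hy00.trans hz0) hzx hx1
    have h5 : L ≤ v (Set.Ioc z x) := csInf_le hbdd ⟨z, hy00.trans hz0, hzx, rfl⟩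
    linarith

lemma key_right {v : Set ℝ → ℝ}
    (h_range : ∀ A, InFiniteUnions A → v A ∈ Set.Icc (0:ℝ) 1)
    (h_zero : v ∅ = 0)
    (h_add : ∀ A B, InFiniteUnions A → InFiniteUnions B → Disjoint A B → v (A ∪ B) = v A + v B)
    (h_div : ∀ A, InFiniteUnions A → ∀ α : ℝ, α ∈ Set.Icc (0:ℝ) 1 →
      ∃ B, InFiniteUnions B ∧ B ⊆ A ∧ v B = α * v A)
    {x : ℝ} (hx0 : 0 ≤ x) (hx1 : x < 1) {ε : ℝ} (hε : 0 < ε) :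
    ∃ y, x < y ∧ y ≤ 1 ∧ v (Set.Ioc x y) < ε := by
  by_contra hcon
  push_neg at hcon
  set S := {r : ℝ | ∃ y, x < y ∧ y ≤ 1 ∧ r = v (Set.Ioc x y)} with hS
  have hSne : S.Nonempty := ⟨v (Set.Ioc x 1), 1, hx1, le_rfl, rfl⟩
  have hSbd : ∀ r ∈ S, ε ≤ r := by rintro r ⟨y, hy0, hyx, rfl⟩; exact hcon y hy0 hyx
  have hbdd : BddBelow S := ⟨ε, hSbd⟩
  set L := sInf S with hL
  have hLε : ε ≤ L := le_csInf hSne hSbd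
  obtain ⟨r, hrS, hr2⟩ := exists_lt_of_csInf_lt hSne (show sInf S < 2 * L by rw [← hL]; linarith)
  obtain ⟨y0, hxy0, hy01, rfl⟩ := hrS
  have haL : L ≤ v (Set.Ioc x y0) := csInf_le hbdd ⟨y0, hxy0, hy01, rfl⟩
  have hAeq : v (Set.Ioc x y0) = v (Set.Ioo x y0) := v_Ioc_eq_Ioo h_zero h_add h_div hx0 hxy0 hy01
  have hIoo : InFiniteUnions (Set.Ioo x y0) := interval_inFU (Ioo_interval hx0 hy01)
  obtain ⟨B, hB, hBsub, hvB⟩ := h_div (Set.Ioo x y0) hIoo (1/2) ⟨by norm_num, by norm_num⟩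
  obtain ⟨n, f, hfi, hBeq⟩ := id hB
  subst hBeq
  by_cases htail : ∃ i t, x < t ∧ Set.Ioo x t ⊆ f i
  · obtain ⟨i, t, htx, hsub⟩ := htail
    have ht'x : x < min t y0 := lt_min htx hxy0
    have hsub' : Set.Ioo x (min t y0) ⊆ ⋃ i, f i := fun s hs =>
      Set.mem_iUnion.mpr ⟨i, hsub ⟨hs.1, hs.2.trans_le (min_le_left t y0)⟩⟩
    have h1 : v (Set.Ioo x (min t y0)) ≤ v (⋃ i, f i) :=
      v_mono h_range h_add hB
        (interval_inFU (Ioo_interval hx0 ((min_le_right t y0).trans hy01))) hsub'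
    have h2 : v (Set.Ioc x (min t y0)) = v (Set.Ioo x (min t y0)) :=
      v_Ioc_eq_Ioo h_zero h_add h_div hx0 ht'x ((min_le_right t y0).trans hy01)
    have h3 : L ≤ v (Set.Ioc x (min t y0)) :=
      csInf_le hbdd ⟨min t y0, ht'x, (min_le_right t y0).trans hy01, rfl⟩
    linarith
  · push_neg at htail
    have hbdd_each : ∀ i, ∃ z, x < z ∧ z ≤ y0 ∧ f i ⊆ Set.Ici z := by
      intro i
      rcases interval_head (hfi i).2 ((Set.subset_iUnion f i).trans hBsub) hxy0 with h | h
      · obtain ⟨t, htx, hsub⟩ := h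
        exact absurd hsub (htail i t htx)
      · exact h
    obtain ⟨z, hz0, hzx, hzB⟩ := union_bounded_below n f x y0 hxy0 hbdd_each
    have hdisj : Disjoint (⋃ i, f i) (Set.Ioo x z) :=
      Set.disjoint_left.mpr fun s hsB hsC => absurd (Set.mem_Ici.mp (hzB hsB)) (not_le.mpr hsC.2)
    have hCI : InFiniteUnions (Set.Ioo x z) := interval_inFU (Ioo_interval hx0 (hzx.trans hy01))
    have hsub2 : (⋃ i, f i) ∪ Set.Ioo x z ⊆ Set.Ioo x y0 :=
      Set.union_subset hBsub (fun s hs => ⟨hs.1, lt_of_lt_of_le hs.2 hzx⟩)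
    have hmono := v_mono h_range h_add hIoo (union_inFU hB hCI) hsub2
    rw [h_add _ _ hB hCI hdisj] at hmono
    have h4 : v (Set.Ioc x z) = v (Set.Ioo x z) :=
      v_Ioc_eq_Ioo h_zero h_add h_div hx0 hz0 (hzx.trans hy01)
    have h5 : L ≤ v (Set.Ioc x z) := csInf_le hbdd ⟨z, hz0, hzx.trans hy01, rfl⟩
    linarith

theorem divisible_valuation_has_continuous_distribution_function
    (v : Set ℝ → ℝ)
    (h_range : ∀ A, InFiniteUnions A → v A ∈ Set.Icc (0:ℝ) 1)
    (h_zero : v ∅ = 0)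
    (h_one : v (Set.Icc (0:ℝ) 1) = 1)
    (h_add : ∀ A B, InFiniteUnions A → InFiniteUnions B → Disjoint A B →
      v (A ∪ B) = v A + v B)
    (h_div : ∀ A, InFiniteUnions A → ∀ α : ℝ, α ∈ Set.Icc (0:ℝ) 1 →
      ∃ B, InFiniteUnions B ∧ B ⊆ A ∧ v B = α * v A) :
    ContinuousOn (fun x : ℝ => v (Set.Icc 0 x)) (Set.Icc (0:ℝ) 1) ∧
    v (Set.Icc (0:ℝ) 0) = 0 := by
  have hzero' : v (Set.Icc (0:ℝ) 0) = 0 := by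
    rw [Set.Icc_self]
    exact v_singleton h_zero h_div ⟨le_rfl, zero_le_one⟩
  refine ⟨?_, hzero'⟩
  intro x hx
  rw [Metric.continuousWithinAt_iff]
  intro ε hε
  have hx0 := hx.1
  have hx1 := hx.2
  have hLeft : ∃ δ1 > 0, ∀ y, 0 ≤ y → y ≤ x → x - y < δ1 → v (Set.Ioc y x) < ε := by
    rcases hx0.eq_or_lt with heq | hpos
    · refine ⟨1, one_pos, fun y hy0 hyx _ => ?_⟩
      have hy : y = x := le_antisymm hyx (heq ▸ hy0)
      rw [hy, Set.Ioc_self, h_zero]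
      exact hε
    · obtain ⟨yl, hyl0, hylx, hylv⟩ := key_left h_range h_zero h_add h_div hpos hx1 hε
      refine ⟨x - yl, by linarith, fun y hy0 hyx hdy => ?_⟩
      have hyyl : yl ≤ y := by linarith
      have hmono := v_mono h_range h_add (interval_inFU (Ioc_interval hyl0 hx1))
        (interval_inFU (Ioc_interval hy0 hx1)) (Set.Ioc_subset_Ioc_left hyyl)
      linarith
  have hRight : ∃ δ2 > 0, ∀ y, x ≤ y → y ≤ 1 → y - x < δ2 → v (Set.Ioc x y) < ε := by
    rcases eq_or_lt_of_le hx1 with heq | hlt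
    · refine ⟨1, one_pos, fun y hxy hy1 _ => ?_⟩
      have hy : y = x := le_antisymm (by rw [heq]; exact hy1) hxy
      rw [hy, Set.Ioc_self, h_zero]
      exact hε
    · obtain ⟨yr, hxyr, hyr1, hyrv⟩ := key_right h_range h_zero h_add h_div hx0 hlt hε
      refine ⟨yr - x, by linarith, fun y hxy hy1 hdy => ?_⟩
      have hyyr : y ≤ yr := by linarith
      have hmono := v_mono h_range h_add (interval_inFU (Ioc_interval hx0 hyr1))
        (interval_inFU (Ioc_interval hx0 hy1)) (Set.Ioc_subset_Ioc_right hyyr)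
      linarith
  obtain ⟨δ1, hδ1, H1⟩ := hLeft
  obtain ⟨δ2, hδ2, H2⟩ := hRight
  refine ⟨min δ1 δ2, lt_min hδ1 hδ2, ?_⟩
  intro y hy hdist
  rw [Real.dist_eq] at hdist ⊢
  rcases le_total y x with hyx | hxy
  · have hsplit := v_Icc_split h_add hy.1 hyx hx1
    have hnn := v_nonneg h_range (interval_inFU (Ioc_interval hy.1 hx1))
    have hv1 : v (Set.Ioc y x) < ε := by
      refine H1 y hy.1 hyx ?_
      have : x - y ≤ |y - x| := by
        rw [abs_sub_comm]
        exact le_abs_self _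
      have hm := min_le_left δ1 δ2
      linarith
    have heq2 : v (Set.Icc 0 y) - v (Set.Icc 0 x) = -(v (Set.Ioc y x)) := by linarith
    rw [heq2, abs_neg, abs_of_nonneg hnn]
    exact hv1
  · have hsplit := v_Icc_split h_add hx0 hxy hy.2
    have hnn := v_nonneg h_range (interval_inFU (Ioc_interval hx0 hy.2))
    have hv1 : v (Set.Ioc x y) < ε := by
      refine H2 y hxy hy.2 ?_
      have : y - x ≤ |y - x| := le_abs_self _
      have hm := min_le_right δ1 δ2
      linarith
    have heq2 : v (Set.Icc 0 y) - v (Set.Icc 0 x) = v (Set.Ioc x y) := by linarith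
    rw [heq2, abs_of_nonneg hnn]
    exact hv1
end

section
/- Let v be a finitely additive valuation on an algebra A over an abstract set X with v(∅)=0, v(X)=1. If v is sliceable, then v satisfies property (DD): for every A ∈ A and every α ∈ (0,1) there is an increasing sequence B^1 ⊆ B^2 ⊆ ⋯ of sets in A with B^n ⊆ A and sup_n v(B^n) = α·v(A). -/
/-!
Fix `t = α · v(A)`. Starting from a set `B ⊆ A` with `v(B) ≤ t`, cut `A \ B` along a slicing into
pieces of value at most `ε` and add the pieces to `B` one at a time for as long as the value stays
`≤ t`; since each piece raises the value by at most `ε` and all of them together reach `v(A) ≥ t`,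
this yields `B ⊆ B' ⊆ A` with `t - ε < v(B') ≤ t`. Repeating with `ε = 1/(n+1)` gives an increasing
sequence whose values have supremum `t`.
-/

open Set MeasureTheory

def IsFinitelyAdditive {X : Type*} (𝒜 : Set (Set X)) (v : Set X → ℝ) : Prop :=
  ∀ A ∈ 𝒜, ∀ B ∈ 𝒜, Disjoint A B → v (A ∪ B) = v A + v B

namespace IsFinitelyAdditive

variable {X : Type*} {𝒜 : Set (Set X)} {v : Set X → ℝ}

theorem monotoneOn (h𝒜 : IsSetRing 𝒜) (hv : IsFinitelyAdditive 𝒜 v)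
    (hv₀ : ∀ A ∈ 𝒜, 0 ≤ v A) : MonotoneOn v 𝒜 := by
  intro B hB A hA hBA
  have hdiff : A \ B ∈ 𝒜 := h𝒜.sdiff_mem hA hB
  have hsplit := hv B hB (A \ B) hdiff disjoint_sdiff_right
  rw [union_sdiff_cancel hBA] at hsplit
  linarith [hv₀ _ hdiff]

theorem union_le (h𝒜 : IsSetRing 𝒜) (hv : IsFinitelyAdditive 𝒜 v)
    (hv₀ : ∀ A ∈ 𝒜, 0 ≤ v A) {A B : Set X} (hA : A ∈ 𝒜) (hB : B ∈ 𝒜) :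
    v (A ∪ B) ≤ v A + v B := by
  have hdiff : B \ A ∈ 𝒜 := h𝒜.sdiff_mem hB hA
  rw [← union_sdiff_self, hv A hA _ hdiff disjoint_sdiff_right]
  gcongr
  exact hv.monotoneOn h𝒜 hv₀ hdiff hB sdiff_subset

theorem exists_superset_mem_Ioc (h𝒜 : IsSetRing 𝒜) (hv : IsFinitelyAdditive 𝒜 v)
    (hv₀ : ∀ A ∈ 𝒜, 0 ≤ v A) {ι : Type*} {C : ι → Set X} {s : Finset ι} {ε t : ℝ} (hε : 0 < ε)
    (hC : ∀ i ∈ s, C i ∈ 𝒜) (hCε : ∀ i ∈ s, v (C i) ≤ ε) {A B₀ : Set X} (hA : A ∈ 𝒜)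
    (hB₀ : B₀ ∈ 𝒜) (hB₀A : B₀ ⊆ A) (hB₀t : v B₀ ≤ t) (htA : t ≤ v A)
    (hcover : A ⊆ B₀ ∪ ⋃ i ∈ s, C i) :
    ∃ B ∈ 𝒜, B₀ ⊆ B ∧ B ⊆ A ∧ v B ∈ Ioc (t - ε) t := by
  classical
  induction s using Finset.induction_on generalizing B₀ with
  | empty =>
    have hAB₀ : A = B₀ := (subset_antisymm hB₀A (by simpa using hcover)).symm
    exact ⟨B₀, hB₀, subset_rfl, hB₀A, by linarith [hAB₀ ▸ htA], hB₀t⟩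
  | insert i s _ ih =>
    have hCi : C i ∈ 𝒜 := hC i (Finset.mem_insert_self i s)
    set B₁ := B₀ ∪ (A ∩ C i)
    have hB₁ : B₁ ∈ 𝒜 := h𝒜.union_mem hB₀ (h𝒜.inter_mem hA hCi)
    by_cases hB₁t : v B₁ ≤ t
    · have hcover₁ : A ⊆ B₁ ∪ ⋃ j ∈ s, C j := by
        intro x hxA
        have := hcover hxA
        simp only [Finset.set_biUnion_insert, mem_union] at this
        grind
      obtain ⟨B, hB, hB₁B, hBA, hBt⟩ :=
        ih (fun j hj => hC j (Finset.mem_insert_of_mem hj))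
          (fun j hj => hCε j (Finset.mem_insert_of_mem hj)) hB₁
          (union_subset hB₀A inter_subset_left) hB₁t hcover₁
      exact ⟨B, hB, subset_union_left.trans hB₁B, hBA, hBt⟩
    · -- the piece `A ∩ C i` pushes the value past `t`, so `B₀` is already within `ε` of `t`
      have hpiece : v (A ∩ C i) ≤ ε :=
        (hv.monotoneOn h𝒜 hv₀ (h𝒜.inter_mem hA hCi) hCi inter_subset_right).trans
          (hCε i (Finset.mem_insert_self i s))
      have hB₁_le := hv.union_le h𝒜 hv₀ hB₀ (h𝒜.inter_mem hA hCi)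
      exact ⟨B₀, hB₀, subset_rfl, hB₀A, by linarith, hB₀t⟩

end IsFinitelyAdditive

theorem exists_monotone_isLUB {α : Type*} [Preorder α] {S : Set α} {f : α → ℝ} {t : ℝ} {a : α}
    (ha : a ∈ S) (hle : ∀ x ∈ S, f x ≤ t)
    (hstep : ∀ x ∈ S, ∀ ε > 0, ∃ y ∈ S, x ≤ y ∧ t - ε < f y) :
    ∃ u : ℕ → α, (∀ n, u n ∈ S) ∧ Monotone u ∧ IsLUB (range fun n => f (u n)) t := by
  choose! g hgS hgx hgt using hstep
  let u : ℕ → α := fun n => Nat.rec a (fun n x => g x (1 / (n + 1))) n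
  have huS : ∀ n, u n ∈ S := by
    intro n
    induction n with
    | zero => exact ha
    | succ n ih => exact hgS _ ih _ Nat.one_div_pos_of_nat
  refine ⟨u, huS, monotone_nat_of_le_succ fun n => hgx _ (huS n) _ Nat.one_div_pos_of_nat,
    ?_, fun b hb => le_of_forall_sub_le fun ε hε => ?_⟩
  · rintro _ ⟨n, rfl⟩
    exact hle _ (huS n)
  · obtain ⟨n, hn⟩ := exists_nat_one_div_lt hε
    have hclose : t - 1 / (n + 1) < f (u (n + 1)) := hgt _ (huS n) _ Nat.one_div_pos_of_nat
    linarith [hb ⟨n + 1, rfl⟩]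

theorem sliceable_implies_DD_general
    {X : Type*} (𝒜 : Set (Set X)) (v : Set X → ℝ)
    (h_empty : (∅ : Set X) ∈ 𝒜)
    (h_compl : ∀ A ∈ 𝒜, Aᶜ ∈ 𝒜)
    (h_union : ∀ A ∈ 𝒜, ∀ B ∈ 𝒜, A ∪ B ∈ 𝒜)
    (h_range : ∀ A ∈ 𝒜, v A ∈ Set.Icc (0:ℝ) 1)
    (h_zero : v ∅ = 0)
    (h_add : ∀ A ∈ 𝒜, ∀ B ∈ 𝒜, Disjoint A B → v (A ∪ B) = v A + v B)
    (h_sliceable : ∀ ε : ℝ, 0 < ε →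
      ∃ (n : ℕ) (B : Fin n → Set X),
        (∀ i, B i ∈ 𝒜) ∧
        Pairwise (Function.onFun Disjoint B) ∧
        (⋃ i, B i) = Set.univ ∧
        ∀ i, 0 < v (B i) ∧ v (B i) ≤ ε) :
    ∀ A ∈ 𝒜, ∀ α : ℝ, α ∈ Set.Ioo (0:ℝ) 1 →
      ∃ B : ℕ → Set X,
        (∀ n, B n ∈ 𝒜) ∧
        Monotone B ∧
        (∀ n, B n ⊆ A) ∧
        (⨆ n, v (B n)) = α * v A ∧ BddAbove (Set.range fun n => v (B n)) := by
  intro A hA α ⟨hα₀, hα₁⟩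
  have h𝒜 : IsSetRing 𝒜 :=
    (IsSetAlgebra.mk h_empty h_compl fun _ _ hA hB => h_union _ hA _ hB).isSetRing
  have hv₀ : ∀ B ∈ 𝒜, 0 ≤ v B := fun B hB => (h_range B hB).1
  have htA : α * v A ≤ v A := mul_le_of_le_one_left (hv₀ A hA) hα₁.le
  let S : Set (Set X) := {B | B ∈ 𝒜 ∧ B ⊆ A ∧ v B ≤ α * v A}
  have hstep : ∀ B₀ ∈ S, ∀ ε > 0, ∃ B ∈ S, B₀ ⊆ B ∧ α * v A - ε < v B := by
    rintro B₀ ⟨hB₀, hB₀A, hB₀t⟩ ε hε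
    obtain ⟨n, C, hC, -, hcover, hCε⟩ := h_sliceable ε hε
    obtain ⟨B, hB, hB₀B, hBA, hBt⟩ := IsFinitelyAdditive.exists_superset_mem_Ioc h𝒜 h_add hv₀
      (s := Finset.univ) hε (fun i _ => hC i) (fun i _ => (hCε i).2) hA hB₀ hB₀A hB₀t htA
      (by simp [hcover])
    exact ⟨B, ⟨hB, hBA, hBt.2⟩, hB₀B, hBt.1⟩
  obtain ⟨B, hB, hBmono, hlub⟩ := exists_monotone_isLUB (S := S) (a := ∅)
    ⟨h_empty, empty_subset A, h_zero ▸ mul_nonneg hα₀.le (hv₀ A hA)⟩ (fun _ hB => hB.2.2) hstep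
  exact ⟨B, fun n => (hB n).1, hBmono, fun n => (hB n).2.1, hlub.ciSup_eq, hlub.bddAbove⟩

theorem sliceable_implies_DD
    {X : Type*} (𝒜 : Set (Set X)) (v : Set X → ℝ)
    (h_empty : (∅ : Set X) ∈ 𝒜)
    (h_compl : ∀ A ∈ 𝒜, Aᶜ ∈ 𝒜)
    (h_union : ∀ A ∈ 𝒜, ∀ B ∈ 𝒜, A ∪ B ∈ 𝒜)
    (h_range : ∀ A ∈ 𝒜, v A ∈ Set.Icc (0:ℝ) 1)
    (h_zero : v ∅ = 0)
    (h_one : v Set.univ = 1)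
    (h_add : ∀ A ∈ 𝒜, ∀ B ∈ 𝒜, Disjoint A B → v (A ∪ B) = v A + v B)
    (h_sliceable : ∀ ε : ℝ, 0 < ε →
      ∃ (n : ℕ) (B : Fin n → Set X),
        (∀ i, B i ∈ 𝒜) ∧
        Pairwise (Function.onFun Disjoint B) ∧
        (⋃ i, B i) = Set.univ ∧
        ∀ i, 0 < v (B i) ∧ v (B i) ≤ ε) :
    ∀ A ∈ 𝒜, ∀ α : ℝ, α ∈ Set.Ioo (0:ℝ) 1 →
      ∃ B : ℕ → Set X,
        (∀ n, B n ∈ 𝒜) ∧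
        Monotone B ∧
        (∀ n, B n ⊆ A) ∧
        (⨆ n, v (B n)) = α * v A ∧ BddAbove (Set.range fun n => v (B n)) :=
  sliceable_implies_DD_general 𝒜 v h_empty h_compl h_union h_range h_zero h_add h_sliceable
end

section
/- Let μ be a σ-additive valuation (probability measure) on a σ-algebra A over X. Then X decomposes as a disjoint union X = A_∞ ∪ A_1 ∪ A_2 ∪ ⋯ where A_1, A_2, … are at most countably many pairwise disjoint atoms of μ and the restriction B ↦ μ(B ∩ A_∞) is atom-free. -/
open MeasureTheory

/-- An atom of a measure `μ`: a measurable set of positive measure all of whose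
measurable subsets have measure `0` or full measure `μ A`. -/
def IsValuationAtom {X : Type*} [MeasurableSpace X] (μ : Measure X) (A : Set X) : Prop :=
  MeasurableSet A ∧ 0 < μ A ∧ ∀ B : Set X, MeasurableSet B → B ⊆ A → μ B = 0 ∨ μ B = μ A

/-!
Choose atoms greedily: at step `n` take an atom disjoint from the earlier ones whose measure is
at least half the supremum of the measures of all such atoms. The chosen atoms are disjoint, so
their measures are summable and tend to `0`. An atom disjoint from all of them has measure at
most twice each of theirs, hence measure `0`, which is absurd; so the complement of their union
contains no atom of `μ`, which is exactly atom-freeness of `B ↦ μ (B ∩ Ainf)`.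
-/

open Set
open scoped ENNReal

theorem ENNReal.exists_le_two_mul_of_iSup_ne_top {ι : Type*} {f : ι → ℝ≥0∞}
    (h0 : ∃ i, f i ≠ 0) (htop : ⨆ i, f i ≠ ⊤) : ∃ i, ∀ j, f j ≤ 2 * f i := by
  obtain ⟨i₀, hi₀⟩ := h0
  have hpos : ⨆ i, f i ≠ 0 := ((pos_iff_ne_zero.2 hi₀).trans_le (le_iSup f i₀)).ne'
  obtain ⟨i, hi⟩ := lt_iSup_iff.1 (ENNReal.half_lt_self hpos htop)
  refine ⟨i, fun j => ?_⟩
  calc f j ≤ ⨆ i, f i := le_iSup f j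
    _ = (⨆ i, f i) / 2 + (⨆ i, f i) / 2 := (ENNReal.add_halves _).symm
    _ ≤ 2 * f i := by rw [two_mul]; gcongr

section Atoms

variable {X : Type*} [MeasurableSpace X] {μ : Measure X}

theorem isValuationAtom_inter {B S : Set X} (hB : MeasurableSet B) (hS : MeasurableSet S)
    (hpos : 0 < μ (B ∩ S))
    (h : ∀ C, MeasurableSet C → C ⊆ B → μ (C ∩ S) = 0 ∨ μ (C ∩ S) = μ (B ∩ S)) :
    IsValuationAtom μ (B ∩ S) := by
  refine ⟨hB.inter hS, hpos, fun C hC hCBS => ?_⟩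
  simpa [inter_eq_self_of_subset_left (hCBS.trans inter_subset_right)] using
    h C hC (hCBS.trans inter_subset_left)

theorem IsValuationAtom.exists_disjoint_le_two_mul [IsFiniteMeasure μ] {S : Set X}
    (h : ∃ T, IsValuationAtom μ T ∧ Disjoint T S) :
    ∃ T, (IsValuationAtom μ T ∧ Disjoint T S) ∧
      ∀ T', IsValuationAtom μ T' ∧ Disjoint T' S → μ T' ≤ 2 * μ T := by
  obtain ⟨T₀, hT₀⟩ := h
  obtain ⟨⟨T, hT⟩, hmax⟩ := ENNReal.exists_le_two_mul_of_iSup_ne_top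
    (f := fun T : {T // IsValuationAtom μ T ∧ Disjoint T S} => μ T) ⟨⟨T₀, hT₀⟩, hT₀.1.2.1.ne'⟩
    (ne_top_of_le_ne_top (measure_ne_top μ univ) (iSup_le fun _ => measure_mono (subset_univ _)))
  exact ⟨T, hT, fun T' hT' => hmax ⟨T', hT'⟩⟩

variable (μ)

-- A largest atom avoiding `S` need not exist, hence the factor `2`.
open Classical in
noncomputable def nextAtom (S : Set X) : Set X :=
  if h : ∃ T, (IsValuationAtom μ T ∧ Disjoint T S) ∧
      ∀ T', IsValuationAtom μ T' ∧ Disjoint T' S → μ T' ≤ 2 * μ T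
  then h.choose else ∅

theorem nextAtom_eq_empty_or (S : Set X) :
    nextAtom μ S = ∅ ∨ IsValuationAtom μ (nextAtom μ S) ∧ Disjoint (nextAtom μ S) S := by
  unfold nextAtom
  split_ifs with h
  exacts [Or.inr h.choose_spec.1, Or.inl rfl]

theorem measurableSet_nextAtom (S : Set X) : MeasurableSet (nextAtom μ S) := by
  rcases nextAtom_eq_empty_or μ S with h | h
  exacts [h ▸ .empty, h.1.1]

theorem disjoint_nextAtom (S : Set X) : Disjoint (nextAtom μ S) S := by
  rcases nextAtom_eq_empty_or μ S with h | h
  exacts [h ▸ disjoint_bot_left, h.2]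

theorem measure_le_two_mul_nextAtom [IsFiniteMeasure μ] {S T : Set X}
    (hT : IsValuationAtom μ T) (hTS : Disjoint T S) : μ T ≤ 2 * μ (nextAtom μ S) := by
  have h := IsValuationAtom.exists_disjoint_le_two_mul ⟨T, hT, hTS⟩
  rw [nextAtom, dif_pos h]
  exact h.choose_spec.2 T ⟨hT, hTS⟩

noncomputable def greedyAtom (n : ℕ) : Set X :=
  nextAtom μ (⋃ k < n, greedyAtom k)

theorem measurableSet_greedyAtom (n : ℕ) : MeasurableSet (greedyAtom μ n) := by
  rw [greedyAtom]
  exact measurableSet_nextAtom μ _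

theorem greedyAtom_eq_empty_or_isValuationAtom (n : ℕ) :
    greedyAtom μ n = ∅ ∨ IsValuationAtom μ (greedyAtom μ n) := by
  rw [greedyAtom]
  exact (nextAtom_eq_empty_or μ _).imp_right And.left

theorem pairwise_disjoint_greedyAtom : Pairwise (Function.onFun Disjoint (greedyAtom μ)) := by
  refine (pairwise_disjoint_on _).2 fun m n hmn => ?_
  rw [greedyAtom.eq_1 μ n]
  exact (disjoint_nextAtom μ _).symm.mono_left (subset_biUnion_of_mem (u := greedyAtom μ) hmn)

theorem exists_not_disjoint_greedyAtom [IsFiniteMeasure μ] {T : Set X}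
    (hT : IsValuationAtom μ T) : ∃ n, ¬ Disjoint T (greedyAtom μ n) := by
  by_contra! hdisj
  have hle : ∀ n, μ T ≤ 2 * μ (greedyAtom μ n) := fun n => by
    rw [greedyAtom]
    exact measure_le_two_mul_nextAtom μ hT (disjoint_iUnion₂_right.2 fun k _ => hdisj k)
  have hsum : ∑' n, μ (greedyAtom μ n) ≠ ⊤ := by
    rw [← measure_iUnion (pairwise_disjoint_greedyAtom μ) (measurableSet_greedyAtom μ)]
    exact measure_ne_top μ _
  have hlim := ENNReal.Tendsto.const_mul (a := 2)
    (ENNReal.tendsto_atTop_zero_of_tsum_ne_top hsum) (Or.inr ENNReal.ofNat_ne_top)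
  rw [mul_zero] at hlim
  exact hT.2.1.ne' (nonpos_iff_eq_zero.1 (ge_of_tendsto' hlim hle))

end Atoms

theorem decomposition_into_sliceable_part_and_atoms
    {X : Type*} [MeasurableSpace X] (μ : Measure X) [IsProbabilityMeasure μ] :
    ∃ (Ainf : Set X) (A : ℕ → Set X),
      MeasurableSet Ainf ∧ (∀ i, MeasurableSet (A i)) ∧
      Pairwise (Function.onFun Disjoint A) ∧
      (∀ i, Disjoint Ainf (A i)) ∧
      Ainf ∪ (⋃ i, A i) = Set.univ ∧
      (∀ i, A i = ∅ ∨ IsValuationAtom μ (A i)) ∧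
      -- the restriction `B ↦ μ (B ∩ Ainf)` is atom-free
      (¬ ∃ B : Set X, MeasurableSet B ∧ 0 < μ (B ∩ Ainf) ∧
        ∀ C : Set X, MeasurableSet C → C ⊆ B →
          μ (C ∩ Ainf) = 0 ∨ μ (C ∩ Ainf) = μ (B ∩ Ainf)) := by
  have hA := measurableSet_greedyAtom μ
  have hAinf : MeasurableSet (⋃ n, greedyAtom μ n)ᶜ := (MeasurableSet.iUnion hA).compl
  refine ⟨(⋃ n, greedyAtom μ n)ᶜ, greedyAtom μ, hAinf, hA, pairwise_disjoint_greedyAtom μ,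
    fun n => disjoint_compl_left.mono_right (subset_iUnion _ n), compl_union_self _,
    greedyAtom_eq_empty_or_isValuationAtom μ, ?_⟩
  rintro ⟨B, hB, hpos, hatom⟩
  obtain ⟨n, hn⟩ := exists_not_disjoint_greedyAtom μ (isValuationAtom_inter hB hAinf hpos hatom)
  exact hn (disjoint_compl_left.mono inter_subset_right (subset_iUnion _ n))
end
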